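/- arXiv:0908.1328 — 2 statements merged into one kernel-verified Lean document; each statement's English description precedes it below -/
import Mathlib

section
/- For all natural numbers n with 1 ≤ n and real parameters p, N, x, the monic Krawtchouk polynomials satisfy x·K_n(x;p,N) = K_{n+1}(x;p,N) + (Np - 2np + n)·K_n(x;p,N) + p·n·(1-p)·(N-n+1)·K_{n-1}(x;p,N). -/
/-- Rising factorial `(a)_k = a(a+1)⋯(a+k-1)`. -/
noncomputable def rf (a : ℝ) (k : ℕ) : ℝ := ∏ j ∈ Finset.range k, (a + j)

/-- Monic Krawtchouk polynomials
`K_n(x;p,N) = (-N)_n p^n ∑_{k=0}^n ((-n)_k (-x)_k / ((-N)_k k!)) (1/p)^k`. -/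
noncomputable def krawtchouk (p N : ℝ) (n : ℕ) (x : ℝ) : ℝ :=
  rf (-N) n * p ^ n *
    ∑ k ∈ Finset.range (n + 1),
      rf (-(n : ℝ)) k * rf (-x) k / (rf (-N) k * (k.factorial : ℝ)) * (1 / p) ^ k

lemma rf_zero (a : ℝ) : rf a 0 = 1 := by simp [rf]

lemma rf_succ (a : ℝ) (k : ℕ) : rf a (k+1) = rf a k * (a + k) := Finset.prod_range_succ _ _

lemma rf_succ' (a : ℝ) (k : ℕ) : rf a (k+1) = a * rf (a+1) k := by
  rw [rf, Finset.prod_range_succ']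
  simp only [Nat.cast_zero, add_zero, rf]
  rw [mul_comm]
  congr 1
  apply Finset.prod_congr rfl
  intro j _
  push_cast
  ring

lemma rf_nat_eq_zero (n k : ℕ) (h : n < k) : rf (-(n:ℝ)) k = 0 :=
  Finset.prod_eq_zero (Finset.mem_range.mpr h) (by simp)

lemma rf_shift (n : ℕ) (k : ℕ) : (n:ℝ) * rf (-(n:ℝ)+1) k = ((n:ℝ) - k) * rf (-(n:ℝ)) k := by
  cases k with
  | zero => simp [rf_zero]
  | succ j =>
    rw [rf_succ, rf_succ' (-(n:ℝ)) j]
    push_cast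
    ring

theorem krawtchouk_three_term (n : ℕ) (hn : 1 ≤ n) (p N x : ℝ)
    (hp : p ≠ 0) (hN : ∀ k ≤ n + 1, rf (-N) k ≠ 0) :
    x * krawtchouk p N n x =
      krawtchouk p N (n + 1) x + (N * p - 2 * n * p + n) * krawtchouk p N n x +
        p * n * (1 - p) * (N - n + 1) * krawtchouk p N (n - 1) x := by
  set e : ℕ → ℝ := fun k => rf (-x) k with he
  set T : ℕ → ℕ → ℝ := fun m k => rf (-(m:ℝ)) k / (rf (-N) k * (k.factorial : ℝ)) * (1/p)^k with hT
  have hK : ∀ m : ℕ, krawtchouk p N m x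
      = rf (-N) m * p ^ m * ∑ k ∈ Finset.range (m+1), T m k * e k := by
    intro m
    unfold krawtchouk
    congr 1
    apply Finset.sum_congr rfl
    intro k _
    simp only [hT, he]
    ring
  have hT0 : ∀ m : ℕ, T m 0 * e 0 = 1 := by
    intro m; simp [hT, he, rf_zero]
  -- cast for n-1
  have hcast : -((n-1 : ℕ) : ℝ) = -(n:ℝ) + 1 := by
    have : ((n-1 : ℕ) : ℝ) = (n:ℝ) - 1 := by
      push_cast [hn]; ring
    rw [this]; ring
  have h1 : krawtchouk p N (n+1) x
      = rf (-N) (n+1) * p^(n+1) * (1 + ∑ k ∈ Finset.range (n+1), T (n+1) (k+1) * e (k+1)) := by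
    rw [hK (n+1), Finset.sum_range_succ' (fun k => T (n+1) k * e k) (n+1), hT0]
    ring
  have h2 : krawtchouk p N n x
      = rf (-N) n * p^n * (1 + ∑ k ∈ Finset.range (n+1), T n (k+1) * e (k+1)) := by
    have hz : T n (n+1) = 0 := by
      simp [hT, rf_nat_eq_zero n (n+1) (Nat.lt_succ_self n)]
    rw [hK n, Finset.sum_range_succ' (fun k => T n k * e k) n, hT0,
      show (∑ k ∈ Finset.range n, T n (k+1) * e (k+1))
        = ∑ k ∈ Finset.range (n+1), T n (k+1) * e (k+1) by
        rw [Finset.sum_range_succ (fun k => T n (k+1) * e (k+1)) n, hz]; simp]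
    ring
  have h3 : krawtchouk p N (n-1) x
      = rf (-N) (n-1) * p^(n-1) * (1 + ∑ k ∈ Finset.range (n+1), T (n-1) (k+1) * e (k+1)) := by
    have hsum : ∑ k ∈ Finset.range (n-1), T (n-1) (k+1) * e (k+1)
        = ∑ k ∈ Finset.range (n+1), T (n-1) (k+1) * e (k+1) := by
      apply Finset.sum_subset (Finset.range_subset_range.mpr (by omega))
      intro k hk hk'
      have hlt : n - 1 < k + 1 := by
        simp only [Finset.mem_range] at hk hk'; omega
      have : T (n-1) (k+1) = 0 := by
        simp [hT, rf_nat_eq_zero (n-1) (k+1) hlt]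
      rw [this, zero_mul]
    rw [hK (n-1), Finset.sum_range_succ' (fun k => T (n-1) k * e k) (n-1), hT0, hsum]
    ring
  have hz : T n (n+1) = 0 := by
    simp [hT, rf_nat_eq_zero n (n+1) (Nat.lt_succ_self n)]
  have h4 : x * krawtchouk p N n x
      = rf (-N) n * p^n * ∑ k ∈ Finset.range (n+1),
          (((k:ℝ)+1) * T n (k+1) - T n k) * e (k+1) := by
    have hxe : ∀ k : ℕ, x * e k = (k:ℝ) * e k - e (k+1) := by
      intro k; simp only [he]; rw [rf_succ]; ring
    have hA : ∑ k ∈ Finset.range (n+1), (k:ℝ) * (T n k * e k)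
        = ∑ k ∈ Finset.range (n+1), ((k:ℝ)+1) * (T n (k+1) * e (k+1)) := by
      rw [Finset.sum_range_succ' (fun k => (k:ℝ) * (T n k * e k)) n,
        Finset.sum_range_succ (fun k => ((k:ℝ)+1) * (T n (k+1) * e (k+1))) n, hz]
      push_cast; simp
    calc x * krawtchouk p N n x
        = rf (-N) n * p^n * ∑ k ∈ Finset.range (n+1), T n k * (x * e k) := by
          rw [hK n, Finset.mul_sum, Finset.mul_sum]
          rw [Finset.mul_sum]
          apply Finset.sum_congr rfl
          intro k _; ring
      _ = rf (-N) n * p^n * ∑ k ∈ Finset.range (n+1),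
            ((k:ℝ) * (T n k * e k) - T n k * e (k+1)) := by
          congr 1
          apply Finset.sum_congr rfl
          intro k _; rw [hxe k]; ring
      _ = rf (-N) n * p^n * (∑ k ∈ Finset.range (n+1), ((k:ℝ)+1) * (T n (k+1) * e (k+1))
            - ∑ k ∈ Finset.range (n+1), T n k * e (k+1)) := by
          rw [Finset.sum_sub_distrib, hA]
      _ = rf (-N) n * p^n * ∑ k ∈ Finset.range (n+1),
            (((k:ℝ)+1) * T n (k+1) - T n k) * e (k+1) := by
          congr 1
          rw [← Finset.sum_sub_distrib]
          apply Finset.sum_congr rfl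
          intro k _; ring
  -- nonzero facts
  have hRn : rf (-N) n ≠ 0 := hN n (by omega)
  have hnn : rf (-N) n = rf (-N) (n-1) * (-N + ((n:ℝ)-1)) := by
    conv_lhs => rw [show n = (n-1)+1 by omega]
    rw [rf_succ]
    congr 2
    push_cast [hn]; ring
  have hnN : -N + ((n:ℝ)-1) ≠ 0 := by
    rw [hnn] at hRn; exact right_ne_zero_of_mul hRn
  have hd : rf (-N) (n-1) = rf (-N) n / (-N + ((n:ℝ)-1)) := by
    rw [eq_div_iff hnN]; exact hnn.symm
  have hnne : (n:ℝ) ≠ 0 := Nat.cast_ne_zero.mpr (by omega)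
  have hpn : p^n = p^(n-1) * p := by rw [← pow_succ]; congr 1; omega
  have hconst : rf (-N) (n+1) * p^(n+1)
      + (N*p - 2*(n:ℝ)*p + (n:ℝ)) * (rf (-N) n * p^n)
      + (p*(n:ℝ)*(1-p)*(N-(n:ℝ)+1)) * (rf (-N) (n-1) * p^(n-1)) = 0 := by
    rw [rf_succ (-N) n, hd, pow_succ, hpn]
    field_simp
    ring
  have hcoef : ∀ k ∈ Finset.range (n+1),
      rf (-N) n * p^n * ((((k:ℝ)+1) * T n (k+1) - T n k) * e (k+1))
      = rf (-N) (n+1) * p^(n+1) * (T (n+1) (k+1) * e (k+1))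
        + (N*p - 2*(n:ℝ)*p + (n:ℝ)) * (rf (-N) n * p^n) * (T n (k+1) * e (k+1))
        + (p*(n:ℝ)*(1-p)*(N-(n:ℝ)+1)) * (rf (-N) (n-1) * p^(n-1)) * (T (n-1) (k+1) * e (k+1)) := by
    intro k hk
    have hkn : k ≤ n := by simpa [Nat.lt_succ_iff] using hk
    have hRk : rf (-N) k ≠ 0 := hN k (by omega)
    have hRk1 : rf (-N) (k+1) ≠ 0 := hN (k+1) (by omega)
    have hkN : -N + (k:ℝ) ≠ 0 := by
      rw [rf_succ] at hRk1; exact right_ne_zero_of_mul hRk1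
    have hf : (k.factorial : ℝ) ≠ 0 := Nat.cast_ne_zero.mpr k.factorial_ne_zero
    have hk1 : ((k:ℝ)+1) ≠ 0 := by positivity
    have hsh : rf (-(n:ℝ)+1) (k+1) = ((n:ℝ) - ((k:ℝ)+1)) * rf (-(n:ℝ)) (k+1) / (n:ℝ) := by
      rw [eq_div_iff hnne]
      have := rf_shift n (k+1)
      push_cast at this
      linarith [this]
    simp only [hT, he]
    rw [show -((n+1:ℕ):ℝ) = -((n:ℝ)+1) by push_cast; ring,
      show -((n-1:ℕ):ℝ) = -(n:ℝ)+1 by push_cast [hn]; ring,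
      rf_succ' (-((n:ℝ)+1)) k, show -((n:ℝ)+1)+1 = -(n:ℝ) by ring,
      hsh, rf_succ (-(n:ℝ)) k, rf_succ (-N) k, rf_succ (-N) n, hd,
      Nat.factorial_succ, pow_succ (1/p) k, pow_succ p n, hpn]
    push_cast
    field_simp
    ring
  rw [h4, h1, h2, h3, Finset.mul_sum, Finset.sum_congr rfl hcoef]
  simp only [Finset.sum_add_distrib, ← Finset.mul_sum]
  linear_combination -hconst
end

section
/- For all natural numbers n ≥ 1, all real q with 0 < q < 1, and all real x ≠ 0, the q-differences dH_n of the discrete q-Hermite I polynomials satisfy x·dH_n(x) = ((1−q^n)/(1−q^{n+1}))·dH_{n+1}(x) + q^{n−2}(1−q^n)·dH_{n-1}(x). -/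
/-- The q-shifted factorial `(a;q)_k = ∏_{j=0}^{k-1}(1 - a q^j)`. -/
noncomputable def qpoch (a q : ℝ) (k : ℕ) : ℝ := ∏ j ∈ Finset.range k, (1 - a * q ^ j)

/-- The discrete q-Hermite I polynomials
`H_n(x) = q^{n(n-1)/2} ∑_{k=0}^n ((q^{-n};q)_k (x^{-1};q)_k / (q;q)_k) (-qx)^k`. -/
noncomputable def qHermiteI (q : ℝ) (n : ℕ) (x : ℝ) : ℝ :=
  q ^ (n * (n - 1) / 2) *
    ∑ k ∈ Finset.range (n + 1),
      qpoch (q ^ (-(n : ℤ))) q k * qpoch x⁻¹ q k / qpoch q q k * (-(q * x)) ^ k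

/-- The q-difference `dH_n(x) = (H_n(qx) − H_n(x)) / ((q−1)x)`. -/
noncomputable def qHermiteIDiff (q : ℝ) (n : ℕ) (x : ℝ) : ℝ :=
  (qHermiteI q n (q * x) - qHermiteI q n x) / ((q - 1) * x)

noncomputable def Pp (q : ℝ) (k : ℕ) (x : ℝ) : ℝ := ∏ j ∈ Finset.range k, (x - q ^ j)

noncomputable def Bc (q : ℝ) (n k : ℕ) : ℝ :=
  q ^ (n * (n - 1) / 2) * (qpoch (q ^ (-(n : ℤ))) q k / qpoch q q k) * (-q) ^ k

lemma qpoch_zero (a q : ℝ) : qpoch a q 0 = 1 := by simp [qpoch]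

lemma qpoch_succ (a q : ℝ) (k : ℕ) : qpoch a q (k + 1) = qpoch a q k * (1 - a * q ^ k) := by
  simp [qpoch, Finset.prod_range_succ]

lemma qpoch_succ' (a q : ℝ) (k : ℕ) : qpoch a q (k + 1) = (1 - a) * qpoch (a * q) q k := by
  rw [qpoch, Finset.prod_range_succ']
  simp only [pow_zero, mul_one, qpoch]
  rw [mul_comm]
  congr 1
  apply Finset.prod_congr rfl
  intro j _
  ring

lemma qpoch_q_pos (q : ℝ) (hq0 : 0 < q) (hq1 : q < 1) (k : ℕ) : 0 < qpoch q q k := by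
  apply Finset.prod_pos
  intro j _
  have : q * q ^ j < 1 := by
    calc q * q ^ j ≤ q * 1 := by
          apply mul_le_mul_of_nonneg_left _ hq0.le
          exact pow_le_one₀ hq0.le hq1.le
      _ < 1 := by linarith
  linarith

lemma qpoch_neg_pow_zero (q : ℝ) (hq : q ≠ 0) (n k : ℕ) (h : n < k) :
    qpoch (q ^ (-(n : ℤ))) q k = 0 := by
  apply Finset.prod_eq_zero (Finset.mem_range.mpr h)
  have : q ^ (-(n : ℤ)) * q ^ n = 1 := by
    rw [zpow_neg, zpow_natCast]
    exact inv_mul_cancel₀ (pow_ne_zero n hq)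
  rw [this]; ring

lemma Pp_zero (q x : ℝ) : Pp q 0 x = 1 := by simp [Pp]

lemma Pp_succ (q x : ℝ) (k : ℕ) : Pp q (k + 1) x = (x - q ^ k) * Pp q k x := by
  rw [Pp, Finset.prod_range_succ, mul_comm]; rfl

lemma Pp_succ_q (q x : ℝ) (k : ℕ) : Pp q (k + 1) (q * x) = (q * x - 1) * (q ^ k * Pp q k x) := by
  rw [Pp, Finset.prod_range_succ']
  simp only [pow_zero]
  rw [mul_comm]
  congr 1
  rw [Pp, show (q:ℝ)^k = ∏ _j ∈ Finset.range k, q from by simp, ← Finset.prod_mul_distrib]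
  apply Finset.prod_congr rfl
  intro j _
  ring

lemma Pp_shift (q x : ℝ) (k : ℕ) :
    Pp q (k + 1) (q * x) - Pp q (k + 1) x = (q ^ (k + 1) - 1) * x * Pp q k x := by
  rw [Pp_succ_q, Pp_succ]; ring

lemma H_eq (q : ℝ) (n : ℕ) (x : ℝ) (hx : x ≠ 0) :
    qHermiteI q n x = ∑ k ∈ Finset.range (n + 1), Bc q n k * Pp q k x := by
  rw [qHermiteI, Finset.mul_sum]
  apply Finset.sum_congr rfl
  intro k _
  have hP : Pp q k x = qpoch x⁻¹ q k * x ^ k := by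
    rw [Pp, qpoch, show (x:ℝ)^k = ∏ _j ∈ Finset.range k, x from by simp, ← Finset.prod_mul_distrib]
    apply Finset.prod_congr rfl
    intro j _
    field_simp
  rw [Bc, hP]
  have : (-(q * x)) ^ k = (-q) ^ k * x ^ k := by rw [← neg_mul, mul_pow]
  rw [this]
  ring

lemma Bc_zero (q : ℝ) (hq : q ≠ 0) (n k : ℕ) (h : n < k) : Bc q n k = 0 := by
  rw [Bc, qpoch_neg_pow_zero q hq n k h]
  simp

lemma H_eq' (q : ℝ) (hq : q ≠ 0) (n M : ℕ) (h : n + 1 ≤ M) (x : ℝ) (hx : x ≠ 0) :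
    qHermiteI q n x = ∑ k ∈ Finset.range M, Bc q n k * Pp q k x := by
  rw [H_eq q n x hx]
  apply Finset.sum_subset (Finset.range_subset_range.mpr h)
  intro k hk hk'
  rw [Bc_zero q hq n k (by simp only [Finset.mem_range] at hk' ⊢; omega)]
  ring

lemma q_mul_pow_lt_one (q : ℝ) (hq0 : 0 < q) (hq1 : q < 1) (k : ℕ) : q * q ^ k < 1 := by
  calc q * q ^ k ≤ q * 1 := by
        apply mul_le_mul_of_nonneg_left _ hq0.le
        exact pow_le_one₀ hq0.le hq1.le
    _ < 1 := by linarith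

lemma H_zero (q x : ℝ) : qHermiteI q 0 x = 1 := by
  simp [qHermiteI, qpoch]

lemma zpow_neg_succ_mul (q : ℝ) (hq : q ≠ 0) (m : ℕ) :
    q ^ (-((m + 1 : ℕ) : ℤ)) * q = q ^ (-(m : ℤ)) := by
  rw [← zpow_add_one₀ hq]
  congr 1
  push_cast
  ring

lemma lower (q : ℝ) (hq0 : 0 < q) (hq1 : q < 1) (n : ℕ) (x : ℝ) (hx : x ≠ 0) :
    qHermiteIDiff q n x = (1 - q ^ n) / (1 - q) * qHermiteI q (n - 1) x := by
  have hq : q ≠ 0 := hq0.ne'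
  cases n with
  | zero => simp [qHermiteIDiff, H_zero]
  | succ m =>
    have hqx : q * x ≠ 0 := mul_ne_zero hq hx
    have h1 : qHermiteI q (m + 1) (q * x) - qHermiteI q (m + 1) x
        = ∑ k ∈ Finset.range (m + 2), Bc q (m + 1) k * (Pp q k (q * x) - Pp q k x) := by
      rw [H_eq q (m + 1) (q * x) hqx, H_eq q (m + 1) x hx, ← Finset.sum_sub_distrib]
      apply Finset.sum_congr rfl
      intro k _
      ring
    rw [qHermiteIDiff, h1, Finset.sum_range_succ']
    simp only [Pp_zero, sub_self, mul_zero, add_zero]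
    rw [div_eq_iff (mul_ne_zero (sub_ne_zero.mpr hq1.ne) hx)]
    have hred : Nat.succ m - 1 = m := rfl
    rw [hred, H_eq q m x hx, Finset.mul_sum, Finset.sum_mul]
    apply Finset.sum_congr rfl
    intro k _
    rw [Pp_shift]
    -- coefficient identity
    rw [Bc, Bc, qpoch_succ' (q ^ (-((m + 1 : ℕ) : ℤ))) q k, zpow_neg_succ_mul q hq m,
      qpoch_succ q q k]
    have e2 : (m + 1) * ((m + 1) - 1) / 2 = m * (m - 1) / 2 + m := Nat.triangle_succ m
    rw [e2, pow_add, pow_succ (-q) k]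
    rw [show (q : ℝ) ^ (-((m + 1 : ℕ) : ℤ)) = (q ^ (m + 1))⁻¹ by
      rw [zpow_neg, zpow_natCast]]
    have hD : qpoch q q k ≠ 0 := (qpoch_q_pos q hq0 hq1 k).ne'
    have h2 : (1 : ℝ) - q * q ^ k ≠ 0 := sub_ne_zero.mpr (q_mul_pow_lt_one q hq0 hq1 k).ne'
    have h3 : (1 : ℝ) - q ≠ 0 := sub_ne_zero.mpr hq1.ne'
    have h4 : (q : ℝ) ^ (m + 1) ≠ 0 := pow_ne_zero _ hq
    field_simp
    ring

lemma tri2 (t : ℕ) : (t + 2) * ((t + 2) - 1) / 2 = t * (t - 1) / 2 + t + (t + 1) := by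
  have h1 : (t + 2) * ((t + 2) - 1) / 2 = (t + 1) * ((t + 1) - 1) / 2 + (t + 1) :=
    Nat.triangle_succ (t + 1)
  have h2 := Nat.triangle_succ t
  omega

lemma one_sub_inv_pow_ne (q : ℝ) (hq0 : 0 < q) (hq1 : q < 1) (t : ℕ) :
    (1 : ℝ) - (q ^ (t + 1))⁻¹ ≠ 0 := by
  have hv : (q : ℝ) ^ (t + 1) < 1 := pow_lt_one₀ hq0.le hq1 (Nat.succ_ne_zero t)
  have : 1 < ((q : ℝ) ^ (t + 1))⁻¹ := (one_lt_inv₀ (pow_pos hq0 _)).mpr hv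
  linarith

lemma coeff_succ (q : ℝ) (hq0 : 0 < q) (hq1 : q < 1) (t k : ℕ) :
    Bc q (t + 1) k + q ^ (k + 1) * Bc q (t + 1) (k + 1)
      = Bc q (t + 2) (k + 1)
        + q ^ (((t + 1 : ℕ) : ℤ) - 1) * (1 - q ^ (t + 1)) * Bc q t (k + 1) := by
  have hq : q ≠ 0 := hq0.ne'
  have hm1 : qpoch (q ^ (-((t + 1 : ℕ) : ℤ))) q (k + 1)
      = qpoch (q ^ (-((t + 1 : ℕ) : ℤ))) q k * (1 - q ^ (-((t + 1 : ℕ) : ℤ)) * q ^ k) :=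
    qpoch_succ _ q k
  have hm2 : qpoch (q ^ (-((t + 2 : ℕ) : ℤ))) q (k + 1)
      = (1 - q ^ (-((t + 2 : ℕ) : ℤ))) * qpoch (q ^ (-((t + 1 : ℕ) : ℤ))) q k := by
    rw [qpoch_succ']
    rw [zpow_neg_succ_mul q hq (t + 1)]
  have hg0 : (1 - q ^ (-((t + 1 : ℕ) : ℤ))) * qpoch (q ^ (-(t : ℤ))) q k
      = qpoch (q ^ (-((t + 1 : ℕ) : ℤ))) q k * (1 - q ^ (-((t + 1 : ℕ) : ℤ)) * q ^ k) := by
    rw [← hm1, qpoch_succ', zpow_neg_succ_mul q hq t]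
  have hgrel : (1 - q ^ (-((t + 1 : ℕ) : ℤ))) * qpoch (q ^ (-(t : ℤ))) q (k + 1)
      = qpoch (q ^ (-((t + 1 : ℕ) : ℤ))) q k * (1 - q ^ (-((t + 1 : ℕ) : ℤ)) * q ^ k)
          * (1 - q ^ (-(t : ℤ)) * q ^ k) := by
    rw [qpoch_succ, ← mul_assoc, hg0]
  have z1 : (q : ℝ) ^ (-((t + 1 : ℕ) : ℤ)) = (q ^ (t + 1))⁻¹ := by
    rw [zpow_neg, zpow_natCast]
  have z2 : (q : ℝ) ^ (-((t + 2 : ℕ) : ℤ)) = (q ^ (t + 2))⁻¹ := by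
    rw [zpow_neg, zpow_natCast]
  have z3 : (q : ℝ) ^ (-(t : ℤ)) = (q ^ t)⁻¹ := by
    rw [zpow_neg, zpow_natCast]
  have z4 : (q : ℝ) ^ (((t + 1 : ℕ) : ℤ) - 1) = q ^ t := by
    rw [show ((t + 1 : ℕ) : ℤ) - 1 = (t : ℤ) by push_cast; ring, zpow_natCast]
  have hne : (1 : ℝ) - (q ^ (t + 1))⁻¹ ≠ 0 := one_sub_inv_pow_ne q hq0 hq1 t
  have eQ1 : (t + 1) * ((t + 1) - 1) / 2 = t * (t - 1) / 2 + t := Nat.triangle_succ t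
  have eQ2 : (t + 2) * ((t + 2) - 1) / 2 = t * (t - 1) / 2 + t + (t + 1) := tri2 t
  have hD : qpoch q q k ≠ 0 := (qpoch_q_pos q hq0 hq1 k).ne'
  have h2 : (1 : ℝ) - q * q ^ k ≠ 0 := sub_ne_zero.mpr (q_mul_pow_lt_one q hq0 hq1 k).ne'
  have hqt : (q : ℝ) ^ t ≠ 0 := pow_ne_zero _ hq
  have hqt1 : (q : ℝ) ^ (t + 1) ≠ 0 := pow_ne_zero _ hq
  have hqt2 : (q : ℝ) ^ (t + 2) ≠ 0 := pow_ne_zero _ hq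
  rw [Bc, Bc, Bc, Bc, hm1, hm2, qpoch_succ q q k, eQ1, eQ2, z4]
  simp only [pow_add, pow_succ (-q) k]
  set A := qpoch (q ^ (-((t + 1 : ℕ) : ℤ))) q k with hA
  set G := qpoch (q ^ (-(t : ℤ))) q (k + 1) with hG
  set D := qpoch q q k with hDdef
  rw [z1, z2]
  rw [z1, z3] at hgrel
  have hGval : G = A * (1 - (q ^ (t + 1))⁻¹ * q ^ k) * (1 - (q ^ t)⁻¹ * q ^ k)
      / (1 - (q ^ (t + 1))⁻¹) := by
    rw [eq_div_iff hne]
    linear_combination hgrel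
  rw [hGval]
  have hu1 : (q : ℝ) ^ (t + 1) - 1 ≠ 0 :=
    sub_ne_zero.mpr (pow_lt_one₀ hq0.le hq1 (Nat.succ_ne_zero t)).ne
  field_simp
  ring

lemma coeff_zero (q : ℝ) (t : ℕ) :
    Bc q (t + 1) 0
      = Bc q (t + 2) 0 + q ^ (((t + 1 : ℕ) : ℤ) - 1) * (1 - q ^ (t + 1)) * Bc q t 0 := by
  have z4 : (q : ℝ) ^ (((t + 1 : ℕ) : ℤ) - 1) = q ^ t := by
    rw [show ((t + 1 : ℕ) : ℤ) - 1 = (t : ℤ) by push_cast; ring, zpow_natCast]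
  simp only [Bc, qpoch_zero, pow_zero, mul_one, div_one]
  rw [z4, Nat.triangle_succ t, tri2 t]
  simp only [pow_add]
  ring

lemma H_one (q : ℝ) (hq0 : 0 < q) (hq1 : q < 1) (x : ℝ) (hx : x ≠ 0) :
    qHermiteI q 1 x = x := by
  have hq : q ≠ 0 := hq0.ne'
  have h3 : (1 : ℝ) - q ≠ 0 := sub_ne_zero.mpr hq1.ne'
  rw [qHermiteI, Finset.sum_range_succ, Finset.sum_range_one]
  simp only [qpoch_zero, qpoch_succ, pow_zero, mul_one, pow_one]
  rw [show (q : ℝ) ^ (-((1 : ℕ) : ℤ)) = q⁻¹ by norm_num]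
  norm_num
  field_simp
  ring

lemma recur (q : ℝ) (hq0 : 0 < q) (hq1 : q < 1) (m : ℕ) (x : ℝ) (hx : x ≠ 0) :
    x * qHermiteI q m x
      = qHermiteI q (m + 1) x + q ^ ((m : ℤ) - 1) * (1 - q ^ m) * qHermiteI q (m - 1) x := by
  have hq : q ≠ 0 := hq0.ne'
  cases m with
  | zero =>
    simp only [pow_zero, sub_self, mul_zero, zero_mul, add_zero, H_zero, mul_one,
      Nat.cast_zero, zero_add]
    rw [H_one q hq0 hq1 x hx]
  | succ t =>
    show x * qHermiteI q (t + 1) x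
        = qHermiteI q (t + 2) x
          + q ^ (((t + 1 : ℕ) : ℤ) - 1) * (1 - q ^ (t + 1)) * qHermiteI q t x
    rw [H_eq' q hq (t + 1) (t + 3) (by omega) x hx,
      H_eq' q hq (t + 2) (t + 3) (by omega) x hx,
      H_eq' q hq t (t + 3) (by omega) x hx,
      Finset.mul_sum, Finset.mul_sum]
    have hsplit : ∀ k ∈ Finset.range (t + 3), x * (Bc q (t + 1) k * Pp q k x)
        = Bc q (t + 1) k * Pp q (k + 1) x + Bc q (t + 1) k * q ^ k * Pp q k x := by
      intro k _
      rw [Pp_succ]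
      ring
    have key : ∀ k ∈ Finset.range (t + 2),
        Bc q (t + 1) k * Pp q (k + 1) x + Bc q (t + 1) (k + 1) * q ^ (k + 1) * Pp q (k + 1) x
          = Bc q (t + 2) (k + 1) * Pp q (k + 1) x
            + q ^ (((t + 1 : ℕ) : ℤ) - 1) * (1 - q ^ (t + 1))
              * (Bc q t (k + 1) * Pp q (k + 1) x) := by
      intro k _
      linear_combination Pp q (k + 1) x * coeff_succ q hq0 hq1 t k
    calc ∑ k ∈ Finset.range (t + 3), x * (Bc q (t + 1) k * Pp q k x)
        = ∑ k ∈ Finset.range (t + 3),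
            (Bc q (t + 1) k * Pp q (k + 1) x + Bc q (t + 1) k * q ^ k * Pp q k x) :=
          Finset.sum_congr rfl hsplit
      _ = (∑ k ∈ Finset.range (t + 2),
              (Bc q (t + 1) k * Pp q (k + 1) x
                + Bc q (t + 1) (k + 1) * q ^ (k + 1) * Pp q (k + 1) x))
            + Bc q (t + 1) 0 * q ^ 0 * Pp q 0 x := by
          rw [Finset.sum_add_distrib,
            Finset.sum_range_succ (fun k => Bc q (t + 1) k * Pp q (k + 1) x) (t + 2),
            Bc_zero q hq (t + 1) (t + 2) (by omega),
            Finset.sum_range_succ' (fun k => Bc q (t + 1) k * q ^ k * Pp q k x) (t + 2),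
            Finset.sum_add_distrib]
          ring
      _ = (∑ k ∈ Finset.range (t + 2),
              (Bc q (t + 2) (k + 1) * Pp q (k + 1) x
                + q ^ (((t + 1 : ℕ) : ℤ) - 1) * (1 - q ^ (t + 1))
                  * (Bc q t (k + 1) * Pp q (k + 1) x)))
            + Bc q (t + 1) 0 * q ^ 0 * Pp q 0 x := by
          rw [Finset.sum_congr rfl key]
      _ = (∑ k ∈ Finset.range (t + 3), Bc q (t + 2) k * Pp q k x)
            + ∑ k ∈ Finset.range (t + 3), q ^ (((t + 1 : ℕ) : ℤ) - 1) * (1 - q ^ (t + 1))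
              * (Bc q t k * Pp q k x) := by
          rw [Finset.sum_range_succ' (fun k => Bc q (t + 2) k * Pp q k x) (t + 2),
            Finset.sum_range_succ'
              (fun k => q ^ (((t + 1 : ℕ) : ℤ) - 1) * (1 - q ^ (t + 1))
                * (Bc q t k * Pp q k x)) (t + 2),
            Finset.sum_add_distrib]
          simp only [Pp_zero, pow_zero, mul_one]
          linear_combination coeff_zero q t

theorem qHermite_diff_three_term (n : ℕ) (hn : 1 ≤ n) (q : ℝ) (hq0 : 0 < q) (hq1 : q < 1)
    (x : ℝ) (hx : x ≠ 0) :
    x * qHermiteIDiff q n x =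
      ((1 - q ^ n) / (1 - q ^ (n + 1))) * qHermiteIDiff q (n + 1) x +
        q ^ ((n : ℤ) - 2) * (1 - q ^ n) * qHermiteIDiff q (n - 1) x := by
  obtain ⟨m, rfl⟩ : ∃ m, n = m + 1 := ⟨n - 1, (Nat.succ_pred_eq_of_pos hn).symm⟩
  rw [lower q hq0 hq1 (m + 1) x hx, lower q hq0 hq1 (m + 1 + 1) x hx,
    lower q hq0 hq1 (m + 1 - 1) x hx]
  simp only [Nat.add_sub_cancel]
  have key := recur q hq0 hq1 m x hx
  have hz : (q : ℝ) ^ (((m + 1 : ℕ) : ℤ) - 2) = q ^ ((m : ℤ) - 1) := by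
    congr 1
    push_cast
    ring
  rw [hz]
  have h3 : (1 : ℝ) - q ≠ 0 := sub_ne_zero.mpr hq1.ne'
  have h2 : (1 : ℝ) - q ^ (m + 1 + 1) ≠ 0 :=
    sub_ne_zero.mpr (pow_lt_one₀ hq0.le hq1 (by omega)).ne'
  have hcan : (1 - q ^ (m + 1)) / (1 - q ^ (m + 1 + 1))
      * ((1 - q ^ (m + 1 + 1)) / (1 - q) * qHermiteI q (m + 1) x)
      = (1 - q ^ (m + 1)) / (1 - q) * qHermiteI q (m + 1) x := by
    field_simp
  rw [hcan]
  linear_combination ((1 - q ^ (m + 1)) / (1 - q)) * key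
end
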